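/- arXiv:2309.04007 — 4 statements merged into one kernel-verified Lean document; each statement's English description precedes it below -/
import Mathlib

section
/- A skew-symmetric bilinear form φ on an infinite-dimensional vector space V is nondegenerate if and only if every finite subset of V is contained in a finite-dimensional subspace on which φ restricts to a nondegenerate form. -/
/-!
Skew-symmetry makes `φ` reflexive, so the restriction of `φ` to `U` is nondegenerate as soon as
its radical `U ⊓ Uᗮ` vanishes. If `r ≠ 0` lies in that radical, nondegeneracy of `φ` gives `w`
with `φ r w ≠ 0`, and adjoining `w` to `U` strictly shrinks the radical: `r` leaves it, and an
element `u + c • w` of the new radical has `0 = φ r (u + c • w) = c * φ r w`, so it already lay in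
the old one. Iterating, any finite-dimensional subspace (e.g. the span of a finite set) embeds in a
finite-dimensional one on which `φ` is nondegenerate.
-/

namespace LinearMap.BilinForm

variable {F V : Type*} [Field F] [AddCommGroup V] [Module F V] {φ : LinearMap.BilinForm F V}

lemma isRefl_of_apply_eq_neg_apply (hskew : ∀ u v : V, φ u v = - φ v u) : φ.IsRefl :=
  fun u v h => by rw [hskew, h, neg_zero]

lemma separatingLeft_iff_exists_ne_zero : φ.SeparatingLeft ↔ ∀ v : V, v ≠ 0 → ∃ u, φ v u ≠ 0 := by
  simp only [SeparatingLeft, ne_eq, ← not_forall]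
  exact forall_congr' fun _ => not_imp_not.symm

lemma separatingLeft_restrict_iff {U : Submodule F V} :
    (φ.restrict U).SeparatingLeft ↔ ∀ u ∈ U, u ≠ 0 → ∃ u' ∈ U, φ u u' ≠ 0 := by
  simp [separatingLeft_iff_exists_ne_zero]

lemma sup_span_inf_orthogonal_lt (hφ : φ.IsRefl) {U : Submodule F V} {r w : V}
    (hr : r ∈ U ⊓ φ.orthogonal U) (hw : φ r w ≠ 0) :
    (U ⊔ F ∙ w) ⊓ φ.orthogonal (U ⊔ F ∙ w) < U ⊓ φ.orthogonal U := by
  have hUle : U ≤ U ⊔ F ∙ w := le_sup_left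
  refine SetLike.lt_iff_le_and_exists.2 ⟨?_, r, hr, fun hr' => hw ?_⟩
  · rintro x ⟨hx, hxorth⟩
    obtain ⟨u, hu, y, hy, rfl⟩ := Submodule.mem_sup.1 hx
    obtain ⟨c, rfl⟩ := Submodule.mem_span_singleton.1 hy
    have hru : φ r u = 0 := hφ _ _ (hr.2 u hu)
    have hc : c = 0 := by
      have := hxorth r (hUle hr.1)
      rw [map_add, hru, map_smul, zero_add, smul_eq_mul] at this
      exact (mul_eq_zero.1 this).resolve_right hw
    subst hc
    rw [zero_smul, add_zero] at hxorth ⊢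
    exact ⟨hu, φ.orthogonal_le hUle hxorth⟩
  · exact hφ _ _ (hr'.2 w (Submodule.mem_sup_right (Submodule.mem_span_singleton_self w)))

lemma exists_le_disjoint_orthogonal (hφ : φ.IsRefl) (hsep : φ.SeparatingLeft)
    (U : Submodule F V) [FiniteDimensional F U] :
    ∃ W : Submodule F V, U ≤ W ∧ FiniteDimensional F W ∧ Disjoint W (φ.orthogonal W) := by
  induction h : Module.finrank F ↥(U ⊓ φ.orthogonal U) using Nat.strong_induction_on
    generalizing U with
  | _ n ih =>
    by_cases hdisj : Disjoint U (φ.orthogonal U)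
    · exact ⟨U, le_rfl, inferInstance, hdisj⟩
    obtain ⟨r, hr, hr0⟩ := Submodule.exists_mem_ne_zero_of_ne_bot (disjoint_iff.not.1 hdisj)
    obtain ⟨w, hw⟩ := separatingLeft_iff_exists_ne_zero.1 hsep r hr0
    have hlt := Submodule.finrank_lt_finrank_of_lt (sup_span_inf_orthogonal_lt hφ hr hw)
    obtain ⟨W, hW, hWfin, hWdisj⟩ := ih _ (h ▸ hlt) (U ⊔ F ∙ w) rfl
    exact ⟨W, le_sup_left.trans hW, hWfin, hWdisj⟩

end LinearMap.BilinForm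

theorem bilin_nondegenerate_iff_locally_nondegenerate_general
    {F V : Type*} [Field F] [AddCommGroup V] [Module F V]
    (φ : LinearMap.BilinForm F V)
    (hskew : ∀ u v : V, φ u v = - φ v u) :
    (∀ v : V, v ≠ 0 → ∃ u : V, φ v u ≠ 0) ↔
      (∀ A : Finset V, ∃ U : Submodule F V, FiniteDimensional F U ∧ (A : Set V) ⊆ (U : Set V) ∧
        ∀ u ∈ U, u ≠ 0 → ∃ u' ∈ U, φ u u' ≠ 0) := by
  have hφ : φ.IsRefl := LinearMap.BilinForm.isRefl_of_apply_eq_neg_apply hskew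
  constructor
  · intro hnd A
    obtain ⟨W, hAW, hW, hdisj⟩ :=
      LinearMap.BilinForm.exists_le_disjoint_orthogonal hφ
        (LinearMap.BilinForm.separatingLeft_iff_exists_ne_zero.2 hnd) (Submodule.span F (A : Set V))
    exact ⟨W, hW, Submodule.subset_span.trans hAW, LinearMap.BilinForm.separatingLeft_restrict_iff.1
      (φ.nondegenerate_restrict_of_disjoint_orthogonal hφ hdisj).1⟩
  · intro hloc v hv
    obtain ⟨U, -, hAU, hU⟩ := hloc {v}
    obtain ⟨u, -, hu⟩ := hU v (hAU (Finset.mem_coe.2 (Finset.mem_singleton_self v))) hv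
    exact ⟨u, hu⟩

/-- A skew-symmetric bilinear form `φ` on an infinite-dimensional vector
space `V` is nondegenerate if and only if every finite subset of `V` is contained in a
finite-dimensional subspace on which `φ` restricts to a nondegenerate form. -/
theorem bilin_nondegenerate_iff_locally_nondegenerate
    {F V : Type*} [Field F] [AddCommGroup V] [Module F V]
    (hV : ¬ FiniteDimensional F V)
    (φ : LinearMap.BilinForm F V)
    (hskew : ∀ u v : V, φ u v = - φ v u) :
    (∀ v : V, v ≠ 0 → ∃ u : V, φ v u ≠ 0) ↔
      (∀ A : Finset V, ∃ U : Submodule F V, FiniteDimensional F U ∧ (A : Set V) ⊆ (U : Set V) ∧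
        ∀ u ∈ U, u ≠ 0 → ∃ u' ∈ U, φ u u' ≠ 0) :=
  bilin_nondegenerate_iff_locally_nondegenerate_general φ hskew
end

section
/- Every nondegenerate alternating bilinear form on a vector space of countably infinite dimension admits a symplectic basis. Consequently, any two nondegenerate alternating bilinear forms on vector spaces of countably infinite dimension over the same field are isometric. -/
/-!
Fix a spanning sequence `e₀, e₁, …` of `V` and choose hyperbolic pairs `(xₙ, yₙ)` one at a time,
with `eₙ` in the span of the first `n + 1` of them. For a finite symplectic family `(xᵢ, yᵢ)`, the
projection `v ↦ v - ∑ᵢ (φ xᵢ v • yᵢ - φ yᵢ v • xᵢ)` lands in the orthogonal of its span `W`. Take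
`xₙ` the projection of `eₙ`, or of any vector outside the finite-dimensional `W` if that vanishes,
and `yₙ` the projection of some `t` with `φ xₙ t ≠ 0`, rescaled so that `φ xₙ yₙ = 1`. The resulting
pairs are linearly independent by biorthogonality and span `V`; two forms with such bases are
isometric through the linear map matching the bases.
-/

open Cardinal Submodule Set

theorem LinearIndependent.of_biorthogonal {R M N κ : Type*} [CommRing R] [AddCommGroup M]
    [Module R M] [AddCommGroup N] [Module R N] [DecidableEq κ] (B : M →ₗ[R] N →ₗ[R] R)
    {v : κ → M} {w : κ → N} (h : ∀ k l, B (v k) (w l) = if k = l then 1 else 0) :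
    LinearIndependent R v := by
  have hdual : ⇑(LinearMap.pi fun l => B.flip (w l)) ∘ v = fun k => Pi.single k 1 := by
    ext k l
    simp [h, Pi.single_apply, eq_comm]
  exact .of_comp _ (hdual ▸ Pi.linearIndependent_single_one κ R)

theorem Module.exists_nat_span_range_eq_top {F V : Type*} [Field F] [AddCommGroup V]
    [Module F V] (hrank : Module.rank F V = ℵ₀) : ∃ e : ℕ → V, span F (range e) = ⊤ := by
  set b := Module.Basis.ofVectorSpace F V
  have hcard : #(Module.Basis.ofVectorSpaceIndex F V) = ℵ₀ := by rw [b.mk_eq_rank'', hrank]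
  have : Countable (Module.Basis.ofVectorSpaceIndex F V) := mk_le_aleph0_iff.1 hcard.le
  have : Infinite (Module.Basis.ofVectorSpaceIndex F V) := infinite_iff.2 hcard.ge
  obtain ⟨f, hf⟩ := exists_surjective_nat (Module.Basis.ofVectorSpaceIndex F V)
  exact ⟨b ∘ f, by rw [hf.range_comp, b.span_eq]⟩

namespace LinearMap.BilinForm

variable {F V ι : Type*} [Field F] [AddCommGroup V] [Module F V] {φ : LinearMap.BilinForm F V}
  {p : ι → V × V}

variable (φ) in
def IsSymplecticOn [DecidableEq ι] (p : ι → V × V) (s : Set ι) : Prop :=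
  ∀ i ∈ s, ∀ j ∈ s, φ (p i).1 (p j).2 = (if i = j then 1 else 0) ∧
    φ (p i).1 (p j).1 = 0 ∧ φ (p i).2 (p j).2 = 0

lemma IsSymplecticOn.snd_fst [DecidableEq ι] (hφ : φ.IsAlt) {s : Set ι}
    (hp : φ.IsSymplecticOn p s) {i j : ι} (hi : i ∈ s) (hj : j ∈ s) :
    φ (p i).2 (p j).1 = -(if j = i then 1 else 0) := by
  rw [← hφ.neg_eq (p j).1 (p i).2, (hp j hj i hi).1]

lemma IsSymplecticOn.linearIndependent [DecidableEq ι] (hφ : φ.IsAlt)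
    (hp : φ.IsSymplecticOn p univ) :
    LinearIndependent F (Sum.elim (fun i => (p i).1) (fun i => (p i).2)) := by
  refine .of_biorthogonal φ (w := Sum.elim (fun i => (p i).2) (fun i => -(p i).1)) ?_
  rintro (i | i) (j | j)
  · simp [(hp i trivial j trivial).1]
  · simp [(hp i trivial j trivial).2.1]
  · simp [(hp i trivial j trivial).2.2]
  · simp [hp.snd_fst hφ trivial trivial, eq_comm]

section pairSpan

variable (F) in
def pairSpan (p : ι → V × V) (s : Set ι) : Submodule F V :=
  span F (⋃ i ∈ s, {(p i).1, (p i).2})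

variable {s t : Set ι} {i : ι}

lemma fst_mem_pairSpan (hi : i ∈ s) : (p i).1 ∈ pairSpan F p s :=
  subset_span (mem_biUnion hi (mem_insert _ _))

lemma snd_mem_pairSpan (hi : i ∈ s) : (p i).2 ∈ pairSpan F p s :=
  subset_span (mem_biUnion hi (mem_insert_of_mem _ rfl))

lemma pairSpan_mono (h : s ⊆ t) : pairSpan F p s ≤ pairSpan F p t :=
  span_mono (biUnion_subset_biUnion_left h)

lemma pairSpan_insert (j : ι) (s : Set ι) :
    pairSpan F p (insert j s) = pairSpan F p s ⊔ span F {(p j).1, (p j).2} := by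
  rw [pairSpan, biUnion_insert, span_union, sup_comm, pairSpan]

lemma pairSpan_univ :
    pairSpan F p univ = span F (Set.range (Sum.elim (fun i => (p i).1) (fun i => (p i).2))) := by
  rw [pairSpan, Set.Sum.elim_range, biUnion_univ]
  congr 1
  ext v
  simp [eq_comm, exists_or]

lemma mem_orthogonal_pairSpan_iff {x : V} :
    x ∈ φ.orthogonal (pairSpan F p s) ↔ ∀ i ∈ s, φ (p i).1 x = 0 ∧ φ (p i).2 x = 0 := by
  refine ⟨fun hx i hi => ⟨hx _ (fst_mem_pairSpan hi), hx _ (snd_mem_pairSpan hi)⟩,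
    fun hx w hw => ?_⟩
  have : pairSpan F p s ≤ LinearMap.ker (LinearMap.flip φ x) :=
    span_le.2 <| iUnion₂_subset fun i hi => by simp [insert_subset_iff, hx i hi]
  exact this hw

end pairSpan

section symplecticProj

variable (φ) in
def symplecticProj (p : ι → V × V) (s : Finset ι) (v : V) : V :=
  v - ∑ i ∈ s, (φ (p i).1 v • (p i).2 - φ (p i).2 v • (p i).1)

variable {s : Finset ι}

lemma sub_symplecticProj_mem_pairSpan (v : V) :
    v - φ.symplecticProj p s v ∈ pairSpan F p s := by
  rw [symplecticProj, sub_sub_cancel]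
  exact sum_mem fun i hi => sub_mem (smul_mem _ _ (snd_mem_pairSpan hi))
    (smul_mem _ _ (fst_mem_pairSpan hi))

lemma symplecticProj_mem_orthogonal [DecidableEq ι] (hφ : φ.IsAlt) (hp : φ.IsSymplecticOn p s)
    (v : V) : φ.symplecticProj p s v ∈ φ.orthogonal (pairSpan F p s) := by
  refine mem_orthogonal_pairSpan_iff.2 fun j hj => ?_
  simp only [symplecticProj, map_sub, map_sum, map_smul, smul_eq_mul]
  constructor
  · rw [Finset.sum_eq_single_of_mem j hj fun i hi hij => ?_]
    · simp [(hp j hj j hj).1, (hp j hj j hj).2.1]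
    · simp [(hp j hj i hi).1, (hp j hj i hi).2.1, Ne.symm hij]
  · rw [Finset.sum_eq_single_of_mem j hj fun i hi hij => ?_]
    · simp [hp.snd_fst hφ hj hj, (hp j hj j hj).2.2]
    · simp [hp.snd_fst hφ hj hi, (hp j hj i hi).2.2, hij]

lemma apply_symplecticProj_of_mem_orthogonal (hφ : φ.IsAlt) {x : V}
    (hx : x ∈ φ.orthogonal (pairSpan F p s)) (t : V) :
    φ x (φ.symplecticProj p s t) = φ x t := by
  have h : φ x (t - φ.symplecticProj p s t) = 0 :=
    hφ.isRefl _ _ (hx _ (sub_symplecticProj_mem_pairSpan t))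
  rwa [map_sub, sub_eq_zero, eq_comm] at h

lemma exists_symplecticProj_ne_zero (hV : ¬ Module.Finite F V) (s : Finset ι) :
    ∃ u, φ.symplecticProj p s u ≠ 0 := by
  by_contra! h
  have htop : pairSpan F p s = ⊤ := eq_top_iff.2 fun v _ => by
    simpa [h v] using sub_symplecticProj_mem_pairSpan (φ := φ) (p := p) (s := s) v
  exact hV <| Module.finite_def.2 <| htop ▸
    fg_span (s.finite_toSet.biUnion fun i _ => toFinite {(p i).1, (p i).2})

end symplecticProj

variable (φ) in
def IsSymplecticExtension (W : Submodule F V) (v : V) (r : V × V) : Prop :=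
  φ r.1 r.2 = 1 ∧ r.1 ∈ φ.orthogonal W ∧ r.2 ∈ φ.orthogonal W ∧ v ∈ W ⊔ span F {r.1, r.2}

theorem exists_isSymplecticExtension [DecidableEq ι] (hφ : φ.IsAlt) (hsep : φ.SeparatingLeft)
    (hV : ¬ Module.Finite F V) {s : Finset ι} (hp : φ.IsSymplecticOn p s) (v : V) :
    ∃ r, φ.IsSymplecticExtension (pairSpan F p s) v r := by
  set W := pairSpan F p s
  set π := φ.symplecticProj p s
  obtain ⟨x, hx0, hxW, hvx⟩ : ∃ x ≠ 0, x ∈ φ.orthogonal W ∧ v ∈ W ⊔ span F {x} := by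
    have hvW : v - π v ∈ W := sub_symplecticProj_mem_pairSpan v
    by_cases h : π v = 0
    · obtain ⟨u, hu⟩ := exists_symplecticProj_ne_zero (φ := φ) (p := p) hV s
      exact ⟨π u, hu, symplecticProj_mem_orthogonal hφ hp u, mem_sup_left (by simpa [h] using hvW)⟩
    · exact ⟨π v, h, symplecticProj_mem_orthogonal hφ hp v,
        by simpa using add_mem_sup hvW (mem_span_singleton_self (π v))⟩
  obtain ⟨t, ht⟩ : ∃ t, φ x t ≠ 0 := not_forall.1 (mt (hsep x) hx0)
  refine ⟨(x, (φ x t)⁻¹ • π t), ?_, hxW, smul_mem _ _ (symplecticProj_mem_orthogonal hφ hp t), ?_⟩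
  · simp [π, apply_symplecticProj_of_mem_orthogonal hφ hxW, ht]
  · exact (sup_le_sup_left (span_mono (by simp)) W : W ⊔ span F {x} ≤ W ⊔ span F {x, _}) hvx

lemma IsSymplecticOn.insert [DecidableEq ι] (hφ : φ.IsAlt) {s : Set ι}
    (hp : φ.IsSymplecticOn p s) {j : ι} (hj : j ∉ s) {v : V}
    (hext : φ.IsSymplecticExtension (pairSpan F p s) v (p j)) :
    φ.IsSymplecticOn p (insert j s) := by
  obtain ⟨h₁₂, h₁, h₂, -⟩ := hext
  rw [mem_orthogonal_pairSpan_iff] at h₁ h₂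
  have hne {i} (hi : i ∈ s) : j ≠ i := fun h => hj (h ▸ hi)
  rintro i (rfl | hi) k (rfl | hk)
  · simp [h₁₂, hφ.self_eq_zero]
  · refine ⟨?_, ?_, ?_⟩
    · rw [← hφ.neg_eq, (h₁ k hk).2, if_neg (hne hk), neg_zero]
    · rw [← hφ.neg_eq, (h₁ k hk).1, neg_zero]
    · rw [← hφ.neg_eq, (h₂ k hk).2, neg_zero]
  · simp [(h₂ i hi).1, (h₁ i hi).1, (h₂ i hi).2, (hne hi).symm]
  · exact hp i hi k hk

section symplecticSeq

/- The span of the earlier pairs is `pairSpan F (φ.symplecticSeq e) (Iio n)` written out, so that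
the recursive calls visibly happen at indices `i < n`. -/
variable (φ) in
noncomputable def symplecticSeq (e : ℕ → V) (n : ℕ) : V × V :=
  Classical.epsilon <| φ.IsSymplecticExtension
    (span F (⋃ (i) (_ : i < n), {(symplecticSeq e i).1, (symplecticSeq e i).2})) (e n)

variable (e : ℕ → V)

lemma symplecticSeq_eq (n : ℕ) :
    φ.symplecticSeq e n = Classical.epsilon
      (φ.IsSymplecticExtension (pairSpan F (φ.symplecticSeq e) (Iio n)) (e n)) := by
  rw [symplecticSeq]; rfl

lemma isSymplecticExtension_symplecticSeq (hφ : φ.IsAlt) (hsep : φ.SeparatingLeft)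
    (hV : ¬ Module.Finite F V) {n : ℕ}
    (hn : φ.IsSymplecticOn (φ.symplecticSeq e) (Iio n)) :
    φ.IsSymplecticExtension (pairSpan F (φ.symplecticSeq e) (Iio n)) (e n)
      (φ.symplecticSeq e n) := by
  rw [symplecticSeq_eq e n]
  apply Classical.epsilon_spec
  rw [← Finset.coe_range] at hn ⊢
  exact exists_isSymplecticExtension hφ hsep hV hn (e n)

lemma isSymplecticOn_symplecticSeq_Iio (hφ : φ.IsAlt) (hsep : φ.SeparatingLeft)
    (hV : ¬ Module.Finite F V) (n : ℕ) :
    φ.IsSymplecticOn (φ.symplecticSeq e) (Iio n) := by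
  induction n with
  | zero => simp [IsSymplecticOn]
  | succ n ih =>
    rw [← Order.succ_eq_add_one, Order.Iio_succ_eq_insert]
    exact ih.insert hφ (lt_irrefl n) (isSymplecticExtension_symplecticSeq e hφ hsep hV ih)

lemma isSymplecticOn_symplecticSeq (hφ : φ.IsAlt) (hsep : φ.SeparatingLeft)
    (hV : ¬ Module.Finite F V) : φ.IsSymplecticOn (φ.symplecticSeq e) univ :=
  fun i _ j _ => isSymplecticOn_symplecticSeq_Iio e hφ hsep hV (i + j + 1) i (by grind) j (by grind)

lemma mem_pairSpan_symplecticSeq (hφ : φ.IsAlt) (hsep : φ.SeparatingLeft)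
    (hV : ¬ Module.Finite F V) (n : ℕ) : e n ∈ pairSpan F (φ.symplecticSeq e) univ := by
  have hn := (isSymplecticExtension_symplecticSeq e hφ hsep hV
    (isSymplecticOn_symplecticSeq_Iio e hφ hsep hV n)).2.2.2
  rw [← pairSpan_insert] at hn
  exact pairSpan_mono (subset_univ _) hn

end symplecticSeq

theorem exists_basis_isSymplecticOn (hφ : φ.IsAlt) (hsep : φ.SeparatingLeft)
    (hrank : Module.rank F V = ℵ₀) :
    ∃ b : Module.Basis (ℕ ⊕ ℕ) F V, φ.IsSymplecticOn (fun i => (b (.inl i), b (.inr i))) univ := by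
  have hV : ¬ Module.Finite F V := fun _ => (Module.rank_lt_aleph0 F V).ne hrank
  obtain ⟨e, he⟩ := Module.exists_nat_span_range_eq_top hrank
  have hp := isSymplecticOn_symplecticSeq e hφ hsep hV
  have hspan : ⊤ ≤ span F (Set.range (Sum.elim (fun i => (φ.symplecticSeq e i).1)
      (fun i => (φ.symplecticSeq e i).2))) := by
    rw [← he, ← pairSpan_univ, span_le]
    rintro _ ⟨n, rfl⟩
    exact mem_pairSpan_symplecticSeq e hφ hsep hV n
  exact ⟨.mk (hp.linearIndependent hφ) hspan, by simpa using hp⟩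

theorem exists_basis_nat_apply_of_lt (hφ : φ.IsAlt) (hsep : φ.SeparatingLeft)
    (hrank : Module.rank F V = ℵ₀) :
    ∃ b : Module.Basis ℕ F V, ∀ i j : ℕ, i < j →
      φ (b i) (b j) = if j = i + 1 ∧ Even i then 1 else 0 := by
  obtain ⟨b, hb⟩ := exists_basis_isSymplecticOn hφ hsep hrank
  refine ⟨b.reindex Equiv.natSumNatEquivNat, fun i j hij => ?_⟩
  obtain ⟨k, rfl⟩ := Equiv.natSumNatEquivNat.surjective i
  obtain ⟨l, rfl⟩ := Equiv.natSumNatEquivNat.surjective j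
  simp only [Module.Basis.reindex_apply, Equiv.symm_apply_apply]
  rcases k with a | a <;> rcases l with c | c <;>
    simp only [Equiv.natSumNatEquivNat_apply, Sum.elim_inl, Sum.elim_inr] at hij ⊢
  · rw [(hb a trivial c trivial).2.1, if_neg (by omega)]
  · simp [(hb a trivial c trivial).1, eq_comm]
  · rw [hb.snd_fst hφ trivial trivial, if_neg (by omega), if_neg (by simp [parity_simps])]
    exact neg_zero
  · rw [(hb a trivial c trivial).2.2, if_neg (by omega)]

theorem apply_basis_equiv_of_lt {ι V' : Type*} [LinearOrder ι] [AddCommGroup V'] [Module F V']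
    {φ' : LinearMap.BilinForm F V'} (hφ : φ.IsAlt) (hφ' : φ'.IsAlt) (b : Module.Basis ι F V)
    (b' : Module.Basis ι F V') (h : ∀ i j, i < j → φ' (b' i) (b' j) = φ (b i) (b j)) (v u : V) :
    φ' (b.equiv b' (.refl ι) v) (b.equiv b' (.refl ι) u) = φ v u := by
  let T : V →ₗ[F] V' := b.equiv b' (.refl ι)
  suffices φ'.compl₁₂ T T = φ from LinearMap.congr_fun₂ this v u
  refine ext_basis b fun i j => ?_
  simp only [compl₁₂_apply, T, LinearEquiv.coe_coe, Module.Basis.equiv_apply, Equiv.refl_apply]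
  rcases lt_trichotomy i j with hij | rfl | hji
  · exact h i j hij
  · rw [hφ.self_eq_zero, hφ'.self_eq_zero]
  · rw [← hφ.neg_eq, ← hφ'.neg_eq, h j i hji]

end LinearMap.BilinForm

/-- Every nondegenerate alternating bilinear form on a vector space of
countably infinite dimension admits a symplectic basis (indexed by `ℕ`, with
`φ (b (2i)) (b (2i+1)) = 1` and `φ (b i) (b j) = 0` for all other pairs `i < j`).
Consequently, any two nondegenerate alternating bilinear forms on vector spaces of
countably infinite dimension over the same field are isometric. -/
theorem symplectic_basis_of_countable_dim
    {F : Type*} [Field F]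
    {V : Type*} [AddCommGroup V] [Module F V] (φ : LinearMap.BilinForm F V)
    (hrank : Module.rank F V = Cardinal.aleph0)
    (halt : ∀ v : V, φ v v = 0)
    (hnd : ∀ v : V, v ≠ 0 → ∃ u : V, φ v u ≠ 0)
    {V' : Type*} [AddCommGroup V'] [Module F V'] (φ' : LinearMap.BilinForm F V')
    (hrank' : Module.rank F V' = Cardinal.aleph0)
    (halt' : ∀ v : V', φ' v v = 0)
    (hnd' : ∀ v : V', v ≠ 0 → ∃ u : V', φ' v u ≠ 0) :
    (∃ b : Module.Basis ℕ F V, ∀ i j : ℕ, i < j →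
        φ (b i) (b j) = if j = i + 1 ∧ Even i then 1 else 0) ∧
      ∃ T : V ≃ₗ[F] V', ∀ v u : V, φ' (T v) (T u) = φ v u := by
  have hsep : φ.SeparatingLeft := fun v hv => not_imp_comm.1 (hnd v) fun ⟨u, hu⟩ => hu (hv u)
  have hsep' : φ'.SeparatingLeft := fun v hv => not_imp_comm.1 (hnd' v) fun ⟨u, hu⟩ => hu (hv u)
  obtain ⟨b, hb⟩ := LinearMap.BilinForm.exists_basis_nat_apply_of_lt halt hsep hrank
  obtain ⟨b', hb'⟩ := LinearMap.BilinForm.exists_basis_nat_apply_of_lt halt' hsep' hrank'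
  exact ⟨⟨b, hb⟩, b.equiv b' (.refl ℕ), LinearMap.BilinForm.apply_basis_equiv_of_lt halt halt' b b'
    fun i j hij => by rw [hb i j hij, hb' i j hij]⟩
end

section
/- An inverse limit of a surjective inverse system of pro-p Demushkin groups is either a Demushkin group or a free pro-p group. More precisely, if G = lim G_i with each H^2(G_i, F_p) ≅ F_p and nondegenerate cup product on H^1(G_i, F_p), then either H^2(G, F_p) = 0 (so cd(G) ≤ 1 and G is free pro-p) or H^2(G, F_p) ≅ F_p with nondegenerate cup product on H^1(G, F_p). -/
/-!
`H²(G)` is the directed union of the images of the lines `H²(Gᵢ)`. Either all of these images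
vanish, and then `H²(G) = 0`, or some inflation `H²(Gᵢ₀) → H²(G)` is nonzero. In that case every
later inflation is nonzero, hence injective on a line, and the nested lines it cuts out all
coincide with `H²(G)`, which is therefore one-dimensional. Nondegeneracy then lifts: a nonzero
`x ∈ H¹(G)` comes from some `H¹(Gₖ)` with `k ≥ i₀`, is paired nontrivially there, and inflation
on `H²(Gₖ)` is injective.
-/

open Module

theorem LinearMap.injective_of_finrank_eq_one {K V W : Type*} [DivisionRing K]
    [AddCommGroup V] [Module K V] [AddCommGroup W] [Module K W]
    (hV : finrank K V = 1) {f : V →ₗ[K] W} (hf : f ≠ 0) : Function.Injective f := by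
  have := isSimpleModule_iff_finrank_eq_one.2 hV
  exact LinearMap.ker_eq_bot.1 <|
    (eq_bot_or_eq_top (LinearMap.ker f)).resolve_right fun h => hf (LinearMap.ker_eq_top.1 h)

namespace DirectedUnionOfRanges

variable {K : Type*} [Field K] {ι : Type*} [Preorder ι]
  {V : ι → Type*} [∀ i, AddCommGroup (V i)] [∀ i, Module K (V i)]
  {W : Type*} [AddCommGroup W] [Module K W] {f : ∀ i, V i →ₗ[K] W}

theorem exists_ge_mem_range [IsDirected ι (· ≤ ·)]
    (hmono : ∀ i j, i ≤ j → LinearMap.range (f i) ≤ LinearMap.range (f j))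
    (hcolim : ∀ x : W, ∃ i, x ∈ LinearMap.range (f i)) (x : W) (i : ι) :
    ∃ k, i ≤ k ∧ x ∈ LinearMap.range (f k) := by
  obtain ⟨j, hj⟩ := hcolim x
  obtain ⟨k, hik, hjk⟩ := directed_of (· ≤ ·) i j
  exact ⟨k, hik, hmono j k hjk hj⟩

theorem ne_zero_of_le (hmono : ∀ i j, i ≤ j → LinearMap.range (f i) ≤ LinearMap.range (f j))
    {i k : ι} (hik : i ≤ k) (hf : f i ≠ 0) : f k ≠ 0 := by
  rw [Ne, ← LinearMap.range_eq_bot] at hf ⊢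
  exact fun hk => hf (eq_bot_iff.2 (hk ▸ hmono i k hik))

theorem injective_of_le (hdim : ∀ i, finrank K (V i) = 1)
    (hmono : ∀ i j, i ≤ j → LinearMap.range (f i) ≤ LinearMap.range (f j))
    {i k : ι} (hik : i ≤ k) (hf : f i ≠ 0) : Function.Injective (f k) :=
  LinearMap.injective_of_finrank_eq_one (hdim k) (ne_zero_of_le hmono hik hf)

theorem range_eq_top [IsDirected ι (· ≤ ·)] (hdim : ∀ i, finrank K (V i) = 1)
    (hmono : ∀ i j, i ≤ j → LinearMap.range (f i) ≤ LinearMap.range (f j))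
    (hcolim : ∀ x : W, ∃ i, x ∈ LinearMap.range (f i)) {i : ι} (hf : f i ≠ 0) :
    LinearMap.range (f i) = ⊤ := by
  refine eq_top_iff.2 fun x _ => ?_
  obtain ⟨k, hik, hxk⟩ := exists_ge_mem_range hmono hcolim x i
  have hrank : ∀ j, i ≤ j → finrank K (LinearMap.range (f j)) = 1 := fun j hij =>
    (LinearMap.finrank_range_of_inj (injective_of_le hdim hmono hij hf)).trans (hdim j)
  have := Module.finite_of_finrank_eq_succ (hrank k hik)
  have hrange_eq := Submodule.eq_of_le_of_finrank_eq (hmono i k hik)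
    ((hrank i le_rfl).trans (hrank k hik).symm)
  exact hrange_eq ▸ hxk

theorem finrank_eq_one [IsDirected ι (· ≤ ·)] (hdim : ∀ i, finrank K (V i) = 1)
    (hmono : ∀ i j, i ≤ j → LinearMap.range (f i) ≤ LinearMap.range (f j))
    (hcolim : ∀ x : W, ∃ i, x ∈ LinearMap.range (f i)) {i : ι} (hf : f i ≠ 0) :
    finrank K W = 1 := by
  rw [← finrank_top, ← range_eq_top hdim hmono hcolim hf,
    LinearMap.finrank_range_of_inj (injective_of_le hdim hmono le_rfl hf), hdim i]

end DirectedUnionOfRanges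

open DirectedUnionOfRanges in
theorem invLimit_demushkin_or_free_general (p : ℕ) [Fact p.Prime]
    {ι : Type*} [Preorder ι] [IsDirected ι (· ≤ ·)]
    (H1 H2 : ι → Type*)
    [∀ i, AddCommGroup (H1 i)] [∀ i, Module (ZMod p) (H1 i)]
    [∀ i, AddCommGroup (H2 i)] [∀ i, Module (ZMod p) (H2 i)]
    (cup : ∀ i, H1 i →ₗ[ZMod p] H1 i →ₗ[ZMod p] H2 i)
    (hdim : ∀ i, Module.finrank (ZMod p) (H2 i) = 1)
    (hnd : ∀ i, ∀ x : H1 i, x ≠ 0 → ∃ y : H1 i, cup i x y ≠ 0)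
    (H1G H2G : Type*) [AddCommGroup H1G] [Module (ZMod p) H1G]
    [AddCommGroup H2G] [Module (ZMod p) H2G]
    (cupG : H1G →ₗ[ZMod p] H1G →ₗ[ZMod p] H2G)
    (inf1 : ∀ i, H1 i →ₗ[ZMod p] H1G) (inf2 : ∀ i, H2 i →ₗ[ZMod p] H2G)
    (hmono1 : ∀ i j, i ≤ j → LinearMap.range (inf1 i) ≤ LinearMap.range (inf1 j))
    (hmono2 : ∀ i j, i ≤ j → LinearMap.range (inf2 i) ≤ LinearMap.range (inf2 j))
    (hcolim1 : ∀ x : H1G, ∃ i, x ∈ LinearMap.range (inf1 i))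
    (hcolim2 : ∀ z : H2G, ∃ i, z ∈ LinearMap.range (inf2 i))
    (hcup : ∀ i (x y : H1 i), inf2 i (cup i x y) = cupG (inf1 i x) (inf1 i y)) :
    Subsingleton H2G ∨
      (Module.finrank (ZMod p) H2G = 1 ∧ ∀ x : H1G, x ≠ 0 → ∃ y : H1G, cupG x y ≠ 0) := by
  by_cases hzero : ∀ i, inf2 i = 0
  · refine .inl ⟨fun a b => ?_⟩
    have hz : ∀ z : H2G, z = 0 := fun z => by
      obtain ⟨i, u, rfl⟩ := hcolim2 z
      rw [hzero i, LinearMap.zero_apply]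
    rw [hz a, hz b]
  obtain ⟨i₀, hi₀⟩ := not_forall.1 hzero
  refine .inr ⟨finrank_eq_one hdim hmono2 hcolim2 hi₀, fun x hx => ?_⟩
  obtain ⟨k, hik, a, rfl⟩ := exists_ge_mem_range hmono1 hcolim1 x i₀
  obtain ⟨b, hb⟩ := hnd k a (by rintro rfl; exact hx (map_zero _))
  refine ⟨inf1 k b, fun h => hb (injective_of_le hdim hmono2 hik hi₀ ?_)⟩
  rw [hcup, h, map_zero]

/-- An inverse limit of a surjective inverse system of pro-`p` Demushkin
groups is either Demushkin or free pro-`p`.  Cohomologically: if `G = lim Gᵢ`, so that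
`H¹(G)` (resp. `H²(G)`) is the directed colimit via inflation of the `H¹(Gᵢ)`
(resp. `H²(Gᵢ)`), the inflations on `H¹` being injective (the transition maps are
surjective) and compatible with cup products, and each `Gᵢ` satisfies
`dim H²(Gᵢ) = 1` with nondegenerate cup product, then either `H²(G) = 0`
(so `cd G ≤ 1` and `G` is free pro-`p`) or `dim H²(G) = 1` and the cup product on
`H¹(G)` is nondegenerate (so `G` is Demushkin). -/
theorem invLimit_demushkin_or_free (p : ℕ) [Fact p.Prime]
    {ι : Type*} [Preorder ι] [IsDirected ι (· ≤ ·)] [Nonempty ι]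
    (H1 H2 : ι → Type*)
    [∀ i, AddCommGroup (H1 i)] [∀ i, Module (ZMod p) (H1 i)]
    [∀ i, AddCommGroup (H2 i)] [∀ i, Module (ZMod p) (H2 i)]
    (cup : ∀ i, H1 i →ₗ[ZMod p] H1 i →ₗ[ZMod p] H2 i)
    (hdim : ∀ i, Module.finrank (ZMod p) (H2 i) = 1)
    (hnd : ∀ i, ∀ x : H1 i, x ≠ 0 → ∃ y : H1 i, cup i x y ≠ 0)
    (H1G H2G : Type*) [AddCommGroup H1G] [Module (ZMod p) H1G]
    [AddCommGroup H2G] [Module (ZMod p) H2G]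
    (cupG : H1G →ₗ[ZMod p] H1G →ₗ[ZMod p] H2G)
    (inf1 : ∀ i, H1 i →ₗ[ZMod p] H1G) (inf2 : ∀ i, H2 i →ₗ[ZMod p] H2G)
    (hinj : ∀ i, Function.Injective (inf1 i))
    (hmono1 : ∀ i j, i ≤ j → LinearMap.range (inf1 i) ≤ LinearMap.range (inf1 j))
    (hmono2 : ∀ i j, i ≤ j → LinearMap.range (inf2 i) ≤ LinearMap.range (inf2 j))
    (hcolim1 : ∀ x : H1G, ∃ i, x ∈ LinearMap.range (inf1 i))
    (hcolim2 : ∀ z : H2G, ∃ i, z ∈ LinearMap.range (inf2 i))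
    (hcup : ∀ i (x y : H1 i), inf2 i (cup i x y) = cupG (inf1 i x) (inf1 i y)) :
    Subsingleton H2G ∨
      (Module.finrank (ZMod p) H2G = 1 ∧ ∀ x : H1G, x ≠ 0 → ∃ y : H1G, cupG x y ≠ 0) :=
  invLimit_demushkin_or_free_general p H1 H2 cup hdim hnd H1G H2G cupG inf1 inf2 hmono1 hmono2
    hcolim1 hcolim2 hcup
end

section
/- Let K' be a field and let K = K'(x_i : i ∈ μ) be a purely transcendental extension of K' in μ variables, where μ is an infinite cardinal. Then the classes of x_i in K^×/(K^×)^p are F_p-linearly independent, hence |K^×/(K^×)^p| ≥ μ. -/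
/-!
The variable `X i` is a prime element of the polynomial ring, so its multiplicity is additive
on products. Writing `y = a / b`, an identity `y ^ n * d = c` in the fraction field becomes
`a ^ n * d = b ^ n * c`, hence the multiplicities of `X i` in `c` and in `d` agree modulo `n`.
A product `∏ X j ^ α j` has `X i`-multiplicity `α i`, which settles the first claim; and
`X i`, `X j` lie in the same class modulo `p`-th powers only if `1 ≡ 0 [MOD p]`, which makes
`i ↦ [X i]` injective.
-/

open Cardinal MvPolynomial

section Multiplicity

variable {R : Type*} [CommMonoidWithZero R] [IsCancelMulZero R] [WfDvdMonoid R] {π : R}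

theorem multiplicity_modEq_of_pow_mul_eq_pow_mul (hπ : Prime π) {n : ℕ} {a b c d : R}
    (hb : b ≠ 0) (hc : c ≠ 0) (h : a ^ n * d = b ^ n * c) :
    multiplicity π c ≡ multiplicity π d [MOD n] := by
  have hne : a ^ n * d ≠ 0 := h ▸ mul_ne_zero (pow_ne_zero n hb) hc
  obtain ⟨han, hd⟩ := mul_ne_zero_iff.mp hne
  obtain rfl | hn := eq_or_ne n 0
  · simp only [pow_zero, one_mul] at h
    rw [h]
  have ha := ne_zero_pow hn han
  have key := congrArg (emultiplicity π) h
  simp only [emultiplicity_mul hπ, emultiplicity_pow hπ,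
    (FiniteMultiplicity.of_prime_left hπ ha).emultiplicity_eq_multiplicity,
    (FiniteMultiplicity.of_prime_left hπ hb).emultiplicity_eq_multiplicity,
    (FiniteMultiplicity.of_prime_left hπ hc).emultiplicity_eq_multiplicity,
    (FiniteMultiplicity.of_prime_left hπ hd).emultiplicity_eq_multiplicity] at key
  norm_cast at key
  unfold Nat.ModEq
  rw [← Nat.add_mul_mod_self_left _ n (multiplicity π b),
    ← Nat.add_mul_mod_self_left (multiplicity π d) n (multiplicity π a)]
  congr 1
  linarith

end Multiplicity

theorem multiplicity_modEq_of_pow_mul_algebraMap_eq {R K : Type*} [CommRing R] [IsDomain R]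
    [WfDvdMonoid R] [Field K] [Algebra R K] [IsFractionRing R K] {π : R} (hπ : Prime π)
    {n : ℕ} {c d : R} (hc : c ≠ 0) {y : K} (h : y ^ n * algebraMap R K d = algebraMap R K c) :
    multiplicity π c ≡ multiplicity π d [MOD n] := by
  obtain ⟨a, b, hb, rfl⟩ := IsFractionRing.div_surjective (A := R) y
  have hb' : algebraMap R K b ≠ 0 := IsFractionRing.to_map_ne_zero_of_mem_nonZeroDivisors hb
  rw [div_pow, div_mul_eq_mul_div, div_eq_iff (pow_ne_zero n hb')] at h
  refine multiplicity_modEq_of_pow_mul_eq_pow_mul (a := a) hπ (nonZeroDivisors.ne_zero hb) hc ?_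
  apply IsFractionRing.injective R K
  rw [map_mul, map_mul, map_pow, map_pow, h, mul_comm]

namespace MvPolynomial

variable {σ R : Type*}

theorem multiplicity_X_X_of_ne [CommSemiring R] [Nontrivial R] {i j : σ} (h : i ≠ j) :
    multiplicity (X i : MvPolynomial σ R) (X j) = 0 :=
  multiplicity_eq_zero.mpr (by simpa using h)

theorem multiplicity_X_prod_X_pow [CommRing R] [IsDomain R] {i : σ} {s : Finset σ} (hi : i ∈ s)
    (α : σ → ℕ) :
    multiplicity (X i : MvPolynomial σ R) (∏ j ∈ s, X j ^ α j) = α i := by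
  classical
  refine multiplicity_eq_of_emultiplicity_eq_some ?_
  rw [Finset.emultiplicity_prod X_prime, Finset.sum_eq_single_of_mem i hi,
    emultiplicity_pow_self_of_prime X_prime]
  intro j _ hj
  rw [emultiplicity_pow X_prime, emultiplicity_eq_zero.mpr (by simpa using hj.symm), mul_zero]

end MvPolynomial

theorem rational_function_field_pth_power_classes_general
    (p : ℕ) [Fact p.Prime] (K' : Type) [Field K'] (ι : Type) :
    (∀ (s : Finset ι) (α : ι → ℕ), (∃ i ∈ s, ¬ (p ∣ α i)) →
      ¬ ∃ y : FractionRing (MvPolynomial ι K'), y ^ p =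
        ∏ i ∈ s, (algebraMap (MvPolynomial ι K') (FractionRing (MvPolynomial ι K'))
          (MvPolynomial.X i)) ^ α i) ∧
    Cardinal.mk ι ≤ Cardinal.mk
      ((FractionRing (MvPolynomial ι K'))ˣ ⧸
        MonoidHom.range (powMonoidHom p :
          (FractionRing (MvPolynomial ι K'))ˣ →* (FractionRing (MvPolynomial ι K'))ˣ)) := by
  have hp : p.Prime := Fact.out
  let x (i : ι) : FractionRing (MvPolynomial ι K') := algebraMap (MvPolynomial ι K') _ (X i)
  have hx (i : ι) : x i ≠ 0 := IsFractionRing.to_map_ne_zero_of_mem_nonZeroDivisors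
    (mem_nonZeroDivisors_of_ne_zero (X_ne_zero i))
  refine ⟨fun s α ⟨i, hi, hα⟩ ⟨y, hy⟩ => hα ?_, ?_⟩
  · have hmod := multiplicity_modEq_of_pow_mul_algebraMap_eq
      (X_prime : Prime (X i : MvPolynomial ι K')) (d := 1)
      (Finset.prod_ne_zero_iff.mpr fun j _ => pow_ne_zero (α j) (X_ne_zero j))
      (y := y) (by simpa [map_prod] using hy)
    rwa [multiplicity_X_prod_X_pow hi, multiplicity_of_one_right X_prime.not_isUnit,
      Nat.modEq_zero_iff_dvd] at hmod
  refine mk_le_of_injective (f := fun i => QuotientGroup.mk (Units.mk0 (x i) (hx i))) ?_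
  intro i j hij
  obtain ⟨v, hv⟩ := QuotientGroup.eq.mp hij
  have hv' : (v : FractionRing (MvPolynomial ι K')) ^ p * x i = x j := by
    have := congrArg Units.val hv
    simp only [powMonoidHom_apply, Units.val_pow_eq_pow_val, Units.val_mul,
      Units.val_inv_eq_inv_val, Units.val_mk0] at this
    rw [this, mul_comm, mul_inv_cancel_left₀ (hx i)]
  by_contra hne
  have hmod := multiplicity_modEq_of_pow_mul_algebraMap_eq
    (X_prime : Prime (X j : MvPolynomial ι K')) (X_ne_zero j) hv'
  rw [multiplicity_self, multiplicity_X_X_of_ne (Ne.symm hne), Nat.modEq_zero_iff_dvd] at hmod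
  exact hp.not_dvd_one hmod

/-- Let `K = K'(xᵢ : i ∈ μ)` be a purely transcendental extension of a
field `K'` in infinitely many variables (realized as the fraction field of the polynomial
ring `K'[xᵢ : i ∈ ι]`).  Then the classes of the variables `xᵢ` in `K^×/(K^×)^p` are
`𝔽_p`-linearly independent: no finite product `x_{i₁}^{α₁} ⋯ x_{iₙ}^{αₙ}` with not all
exponents divisible by `p` is a `p`-th power in `K`.  Hence `|K^×/(K^×)^p| ≥ μ`. -/
theorem rational_function_field_pth_power_classes
    (p : ℕ) [Fact p.Prime] (K' : Type) [Field K'] (ι : Type) [Infinite ι] :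
    (∀ (s : Finset ι) (α : ι → ℕ), (∃ i ∈ s, ¬ (p ∣ α i)) →
      ¬ ∃ y : FractionRing (MvPolynomial ι K'), y ^ p =
        ∏ i ∈ s, (algebraMap (MvPolynomial ι K') (FractionRing (MvPolynomial ι K'))
          (MvPolynomial.X i)) ^ α i) ∧
    Cardinal.mk ι ≤ Cardinal.mk
      ((FractionRing (MvPolynomial ι K'))ˣ ⧸
        MonoidHom.range (powMonoidHom p :
          (FractionRing (MvPolynomial ι K'))ˣ →* (FractionRing (MvPolynomial ι K'))ˣ)) :=
  rational_function_field_pth_power_classes_general p K' ι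
end
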